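/- arXiv:2201.04365 — 3 statements merged into one kernel-verified Lean document; each statement's English description precedes it below -/
import Mathlib

section
/- For every positive integer n, ‖V_n^{-1}‖² = (1/(mn)) · Σ_{k=0}^{n−1} ‖C_n^{km}‖², where ‖·‖ denotes the Frobenius norm. -/
open Matrix Polynomial Finset

noncomputable def frobNorm {α β : Type*} [Fintype α] [Fintype β] (A : Matrix α β ℂ) : ℝ :=
  Real.sqrt ((Aᴴ * A).trace.re)

noncomputable def condNum {k : Type*} [Fintype k] [DecidableEq k] (V : Matrix k k ℂ) : ℝ :=
  frobNorm V * frobNorm V⁻¹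

noncomputable def vand (n : ℕ) (ζ : Fin n.totient → ℂ) :
    Matrix (Fin n.totient) (Fin n.totient) ℂ :=
  fun i j => ζ i ^ (j : ℕ)

noncomputable def wMat (n : ℕ) (ζ : Fin n.totient → ℂ) :
    Matrix (Fin n.totient) (Fin (n.totient * n)) ℂ :=
  fun i j => ζ i ^ (j : ℕ)

noncomputable def compMat (n : ℕ) : Matrix (Fin n.totient) (Fin n.totient) ℂ :=
  fun i j =>
    if (i : ℕ) = (j : ℕ) + 1 then 1
    else if (j : ℕ) = n.totient - 1 then -((Polynomial.cyclotomic n ℂ).coeff i)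
    else 0

noncomputable def sMat (n : ℕ) (hn : 0 < n) :
    Matrix (Fin n.totient) (Fin (n.totient * n)) ℂ :=
  fun i j =>
    (compMat n ^ (((j : ℕ) / n.totient) * n.totient)) i
      ⟨(j : ℕ) % n.totient, Nat.mod_lt _ (Nat.totient_pos.mpr hn)⟩

noncomputable def Acoef (n : ℕ) : ℝ :=
  (((Finset.range n.totient).sup fun j => ((Polynomial.cyclotomic n ℤ).coeff j).natAbs : ℕ) : ℝ)

/-!
Since every ζᵢ is a root of Φₙ, the rows of `V = vand n ζ` are left eigenvectors of the
companion matrix: `V * Cᵖ` has entries `ζᵢ ^ (p + r)`. Hence the matrices `C ^ (k * m)`,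
`k < n`, are exactly the `m × m` column blocks of `V⁻¹ * W`, where `W = wMat n ζ` has entries
`ζᵢ ^ j` for `j < m * n`. Summing over full periods of the roots of unity gives
`W * Wᴴ = m n • 1`, so `‖V⁻¹ * W‖² = m n ‖V⁻¹‖²`.
-/

section FrobeniusNorm

variable {α β γ δ : Type*} [Fintype α] [Fintype β] [Fintype γ] [Fintype δ]

lemma re_trace_conjTranspose_mul_self (A : Matrix α β ℂ) :
    (Aᴴ * A).trace.re = ∑ i, ∑ j, Complex.normSq (A i j) := by
  simp only [Matrix.trace, Matrix.diag_apply, Matrix.mul_apply, Matrix.conjTranspose_apply,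
    Complex.re_sum]
  rw [Finset.sum_comm]
  refine Finset.sum_congr rfl fun i _ => Finset.sum_congr rfl fun j _ => ?_
  simp [Complex.mul_re, Complex.normSq_apply]

lemma frobNorm_sq_eq_sum_normSq (A : Matrix α β ℂ) :
    frobNorm A ^ 2 = ∑ i, ∑ j, Complex.normSq (A i j) := by
  rw [frobNorm, re_trace_conjTranspose_mul_self, Real.sq_sqrt]
  exact sum_nonneg fun _ _ => sum_nonneg fun _ _ => Complex.normSq_nonneg _

lemma frobNorm_sq_eq_re_trace_mul_conjTranspose (A : Matrix α β ℂ) :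
    frobNorm A ^ 2 = (A * Aᴴ).trace.re := by
  rw [← Matrix.trace_mul_comm, frobNorm_sq_eq_sum_normSq, re_trace_conjTranspose_mul_self]

lemma frobNorm_sq_mul_of_mul_conjTranspose_eq_smul_one [DecidableEq β] (B : Matrix α β ℂ)
    {W : Matrix β γ ℂ} {c : ℝ} (hW : W * Wᴴ = (c : ℂ) • 1) :
    frobNorm (B * W) ^ 2 = c * frobNorm B ^ 2 := by
  rw [frobNorm_sq_eq_re_trace_mul_conjTranspose, frobNorm_sq_eq_re_trace_mul_conjTranspose,
    Matrix.conjTranspose_mul, Matrix.mul_assoc, ← Matrix.mul_assoc W, hW, Matrix.smul_mul,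
    Matrix.one_mul, Matrix.mul_smul, Matrix.trace_smul, smul_eq_mul, Complex.re_ofReal_mul]

lemma frobNorm_sq_eq_sum_submatrix (A : Matrix α δ ℂ) (e : β × γ ≃ δ) :
    frobNorm A ^ 2 = ∑ b, frobNorm (A.submatrix id fun c => e (b, c)) ^ 2 := by
  simp only [frobNorm_sq_eq_sum_normSq, Matrix.submatrix_apply, id]
  calc ∑ i, ∑ d, Complex.normSq (A i d)
      = ∑ i, ∑ b, ∑ c, Complex.normSq (A i (e (b, c))) := sum_congr rfl fun i _ => by
        rw [← e.sum_comp fun d => Complex.normSq (A i d), Fintype.sum_prod_type]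
    _ = _ := sum_comm

end FrobeniusNorm

lemma sum_pow_mul_compMat {n : ℕ} {z : ℂ} (hz : (cyclotomic n ℂ).IsRoot z)
    (r : Fin n.totient) :
    ∑ l : Fin n.totient, z ^ (l : ℕ) * compMat n l r = z ^ ((r : ℕ) + 1) := by
  by_cases hr : (r : ℕ) + 1 < n.totient
  · have hcol : ∀ l : Fin n.totient,
        compMat n l r = if l = ⟨r + 1, hr⟩ then 1 else 0 := fun l => by
      simp [compMat, Fin.ext_iff, show (r : ℕ) ≠ n.totient - 1 by omega]
    simp [hcol]
  · have hcol : ∀ l : Fin n.totient, compMat n l r = -(cyclotomic n ℂ).coeff l := fun l => by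
      have := l.isLt
      simp [compMat, show (r : ℕ) = n.totient - 1 by omega,
        show (l : ℕ) ≠ n.totient - 1 + 1 by omega]
    have heval := hz.eq_zero
    rw [eval_eq_sum_range, sum_range_succ, (cyclotomic.monic n ℂ).coeff_natDegree,
      natDegree_cyclotomic, one_mul] at heval
    simp only [hcol]
    rw [Fin.sum_univ_eq_sum_range (fun l => z ^ l * -(cyclotomic n ℂ).coeff l)]
    have hneg : ∑ l ∈ range n.totient, z ^ l * -(cyclotomic n ℂ).coeff l =
        -∑ l ∈ range n.totient, (cyclotomic n ℂ).coeff l * z ^ l := by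
      rw [← sum_neg_distrib]
      exact sum_congr rfl fun l _ => by ring
    rw [hneg, show (r : ℕ) + 1 = n.totient by omega]
    linear_combination -heval

lemma vand_mul_compMat_pow_apply {n : ℕ} {ζ : Fin n.totient → ℂ}
    (hζ : ∀ i, (cyclotomic n ℂ).IsRoot (ζ i)) (p : ℕ) (i r : Fin n.totient) :
    (vand n ζ * compMat n ^ p) i r = ζ i ^ (p + r) := by
  induction p generalizing r with
  | zero => simp [vand]
  | succ p ih =>
    calc (vand n ζ * compMat n ^ (p + 1)) i r
        = ∑ l, (vand n ζ * compMat n ^ p) i l * compMat n l r := by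
          rw [pow_succ, ← Matrix.mul_assoc, Matrix.mul_apply]
      _ = ζ i ^ p * ∑ l : Fin n.totient, ζ i ^ (l : ℕ) * compMat n l r := by
          simp only [ih, pow_add, mul_sum, mul_assoc]
      _ = ζ i ^ (p + 1 + r) := by
          rw [sum_pow_mul_compMat (hζ i)]
          ring

/-- Column `k * m + r` of a matrix with `m * n` columns is column `r` of its `k`-th block. -/
def finBlockEquiv (m n : ℕ) : Fin n × Fin m ≃ Fin (m * n) :=
  finProdFinEquiv.trans (finCongr (Nat.mul_comm n m))

lemma wMat_submatrix_finBlockEquiv {n : ℕ} {ζ : Fin n.totient → ℂ}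
    (hζ : ∀ i, (cyclotomic n ℂ).IsRoot (ζ i)) (k : Fin n) :
    (wMat n ζ).submatrix id (fun r => finBlockEquiv n.totient n (k, r)) =
      vand n ζ * compMat n ^ ((k : ℕ) * n.totient) := by
  ext i r
  rw [vand_mul_compMat_pow_apply hζ]
  simp only [Matrix.submatrix_apply, id, wMat, finBlockEquiv, Equiv.trans_apply,
    finProdFinEquiv_apply_val, finCongr_apply, Fin.val_cast]
  ring

lemma wMat_mul_conjTranspose {n : ℕ} (hn : 0 < n) {ζ : Fin n.totient → ℂ}
    (hζ : Function.Injective ζ) (hζn : ∀ i, ζ i ^ n = 1) :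
    wMat n ζ * (wMat n ζ)ᴴ = ((n.totient * n : ℕ) : ℂ) • 1 := by
  ext i k
  have hconj : star (ζ k) = (ζ k)⁻¹ :=
    (Complex.inv_eq_conj (Complex.norm_eq_one_of_pow_eq_one (hζn k) hn.ne')).symm
  simp only [Matrix.mul_apply, Matrix.conjTranspose_apply, wMat, Matrix.smul_apply,
    Matrix.one_apply, smul_eq_mul, star_pow, hconj, ← mul_pow]
  rw [Fin.sum_univ_eq_sum_range (fun j => (ζ i * (ζ k)⁻¹) ^ j)]
  have hk0 : ζ k ≠ 0 := fun h => by simpa [h, hn.ne'] using hζn k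
  rcases eq_or_ne i k with rfl | hik
  · simp [mul_inv_cancel₀ hk0]
  · have hne : ζ i * (ζ k)⁻¹ ≠ 1 := fun h =>
      hik (hζ (by simpa [mul_inv_eq_one₀ hk0] using h))
    have hpow : (ζ i * (ζ k)⁻¹) ^ (n.totient * n) = 1 := by
      rw [pow_mul', mul_pow, hζn, inv_pow, hζn, inv_one, one_mul, one_pow]
    simp [geom_sum_eq hne, hpow, hik]

theorem frobNorm_sq_vand_inv (n : ℕ) (hn : 0 < n) (ζ : Fin n.totient → ℂ)
    (hζ : Function.Injective ζ) (hζ' : ∀ i, IsPrimitiveRoot (ζ i) n) :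
    frobNorm (vand n ζ)⁻¹ ^ 2 =
      1 / ((n.totient : ℝ) * n) *
        ∑ k ∈ Finset.range n, frobNorm (compMat n ^ (k * n.totient)) ^ 2 := by
  have hroot : ∀ i, (cyclotomic n ℂ).IsRoot (ζ i) := fun i => (hζ' i).isRoot_cyclotomic hn
  have hdet : IsUnit (vand n ζ).det :=
    isUnit_iff_ne_zero.mpr (det_vandermonde_ne_zero_iff.mpr hζ)
  have hblock (k : Fin n) : ((vand n ζ)⁻¹ * wMat n ζ).submatrix id
      (fun r => finBlockEquiv n.totient n (k, r)) = compMat n ^ ((k : ℕ) * n.totient) := by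
    rw [← nonsing_inv_mul_cancel_left _ (compMat n ^ _) hdet,
      ← wMat_submatrix_finBlockEquiv hroot]
    rfl
  have hW : wMat n ζ * (wMat n ζ)ᴴ = ((n.totient * n : ℝ) : ℂ) • 1 := by
    exact_mod_cast wMat_mul_conjTranspose hn hζ fun i => (hζ' i).pow_eq_one
  have hsum : ∑ k ∈ range n, frobNorm (compMat n ^ (k * n.totient)) ^ 2 =
      n.totient * n * frobNorm (vand n ζ)⁻¹ ^ 2 := by
    rw [← frobNorm_sq_mul_of_mul_conjTranspose_eq_smul_one _ hW,
      frobNorm_sq_eq_sum_submatrix _ (finBlockEquiv n.totient n), ← Fin.sum_univ_eq_sum_range]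
    simp only [hblock]
  rw [hsum]
  field_simp
end

section
/- For every positive integer n, ‖V_n^{-1}‖² ≥ A(n)²/(mn), where ‖·‖ is the Frobenius norm and A(n) := max_{0 ≤ j ≤ m−1} |a_n(j)| is the maximum absolute value of the coefficients of X^0, …, X^{m−1} in the n-th cyclotomic polynomial. -/
open Matrix Polynomial Finset

theorem frobNorm_sq_vand_inv_ge (n : ℕ) (hn : 0 < n) (ζ : Fin n.totient → ℂ)
    (hζ : Function.Injective ζ) (hζ' : ∀ i, IsPrimitiveRoot (ζ i) n) :
    frobNorm (vand n ζ)⁻¹ ^ 2 ≥ Acoef n ^ 2 / ((n.totient : ℝ) * n) := by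
  have hm : 0 < n.totient := Nat.totient_pos.mpr hn
  set V := vand n ζ with hV
  have hdet : V.det ≠ 0 := by
    have hVeq : V = Matrix.vandermonde ζ := rfl
    rw [hVeq, Matrix.det_vandermonde]
    refine Finset.prod_ne_zero_iff.mpr fun i _ => Finset.prod_ne_zero_iff.mpr fun j hj => ?_
    exact sub_ne_zero.mpr fun h => (Finset.mem_Ioi.mp hj).ne' (hζ h)
  set c : Fin n.totient → ℂ := fun j => -((Polynomial.cyclotomic n ℂ).coeff j) with hc_def
  set w : Fin n.totient → ℂ := fun i => ζ i ^ n.totient with hw_def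
  have hcm : (Polynomial.cyclotomic n ℂ).coeff n.totient = 1 := by
    have h := (Polynomial.cyclotomic.monic n ℂ).coeff_natDegree
    rwa [Polynomial.natDegree_cyclotomic] at h
  have hkey : V *ᵥ c = w := by
    funext i
    have hroot : Polynomial.eval (ζ i) (Polynomial.cyclotomic n ℂ) = 0 :=
      (hζ' i).isRoot_cyclotomic hn
    have h0 : ∑ j ∈ Finset.range (n.totient + 1),
        (Polynomial.cyclotomic n ℂ).coeff j * ζ i ^ j = 0 := by
      have heval := Polynomial.eval_eq_sum_range (x := ζ i) (p := Polynomial.cyclotomic n ℂ)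
      rw [Polynomial.natDegree_cyclotomic] at heval
      rw [← heval]; exact hroot
    have hsum : ∑ j ∈ Finset.range n.totient, (Polynomial.cyclotomic n ℂ).coeff j * ζ i ^ j
        = -(ζ i ^ n.totient) := by
      rw [Finset.sum_range_succ, hcm, one_mul] at h0
      linear_combination h0
    calc (V *ᵥ c) i = ∑ j : Fin n.totient, ζ i ^ (j : ℕ) * c j := by
          simp [Matrix.mulVec, dotProduct, hV, vand]
      _ = ∑ j ∈ Finset.range n.totient, ζ i ^ j * (-((Polynomial.cyclotomic n ℂ).coeff j)) := by
          exact Fin.sum_univ_eq_sum_range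
            (fun j => ζ i ^ j * (-((Polynomial.cyclotomic n ℂ).coeff j))) n.totient
      _ = -∑ j ∈ Finset.range n.totient, (Polynomial.cyclotomic n ℂ).coeff j * ζ i ^ j := by
          rw [← Finset.sum_neg_distrib]
          exact Finset.sum_congr rfl fun j _ => by ring
      _ = ζ i ^ n.totient := by rw [hsum, neg_neg]
      _ = w i := rfl
  have hc' : c = V⁻¹ *ᵥ w := by
    rw [← hkey, Matrix.mulVec_mulVec, Matrix.nonsing_inv_mul V hdet.isUnit, Matrix.one_mulVec]
  set B := V⁻¹ with hB
  have htr : (Bᴴ * B).trace.re = ∑ j, ∑ i, Complex.normSq (B i j) := by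
    rw [Matrix.trace, Complex.re_sum]
    refine Finset.sum_congr rfl fun j _ => ?_
    rw [Matrix.diag_apply, Matrix.mul_apply, Complex.re_sum]
    refine Finset.sum_congr rfl fun i _ => ?_
    rw [Matrix.conjTranspose_apply, Complex.star_def, mul_comm, Complex.mul_conj,
      Complex.ofReal_re]
  have htr_nonneg : 0 ≤ (Bᴴ * B).trace.re := by
    rw [htr]
    exact Finset.sum_nonneg fun j _ => Finset.sum_nonneg fun i _ => Complex.normSq_nonneg _
  have hfrob : frobNorm B ^ 2 = (Bᴴ * B).trace.re := Real.sq_sqrt htr_nonneg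
  obtain ⟨j₀, hj₀mem, hj₀⟩ := Finset.exists_mem_eq_sup (Finset.range n.totient)
    (Finset.nonempty_range_iff.mpr hm.ne')
    (fun j => ((Polynomial.cyclotomic n ℤ).coeff j).natAbs)
  set J : Fin n.totient := ⟨j₀, Finset.mem_range.mp hj₀mem⟩ with hJ
  have hcast : (Polynomial.cyclotomic n ℂ).coeff j₀
      = (((Polynomial.cyclotomic n ℤ).coeff j₀ : ℤ) : ℂ) := by
    rw [← Polynomial.map_cyclotomic_int n ℂ, Polynomial.coeff_map]
    simp
  have hA : Acoef n = ‖c J‖ := by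
    rw [Acoef, hj₀, hc_def]
    simp only [hJ, norm_neg, hcast, Complex.norm_intCast]
    rw [Nat.cast_natAbs]
    exact Int.cast_abs
  have hw1 : ∀ k, ‖w k‖ = 1 := by
    intro k
    have h1 : ‖ζ k‖ = 1 := Complex.norm_eq_one_of_pow_eq_one (hζ' k).pow_eq_one hn.ne'
    simp [hw_def, norm_pow, h1]
  have h1 : ‖c J‖ ≤ ∑ k, ‖B J k‖ := by
    rw [hc']
    have hmv : (B *ᵥ w) J = ∑ k, B J k * w k := by
      simp [Matrix.mulVec, dotProduct]
    rw [hmv]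
    calc ‖∑ k, B J k * w k‖ ≤ ∑ k, ‖B J k * w k‖ :=
          norm_sum_le _ _
      _ = ∑ k, ‖B J k‖ := by
          refine Finset.sum_congr rfl fun k _ => ?_
          rw [norm_mul, hw1 k, mul_one]
  have hCS : (∑ k, ‖B J k‖) ^ 2
      ≤ (n.totient : ℝ) * ∑ k, ‖B J k‖ ^ 2 := by
    have h := sq_sum_le_card_mul_sum_sq (s := (Finset.univ : Finset (Fin n.totient)))
      (f := fun k => ‖B J k‖)
    simpa using h
  have hrow : ∑ k, ‖B J k‖ ^ 2 ≤ (Bᴴ * B).trace.re := by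
    rw [htr, Finset.sum_comm]
    have hsq : ∀ k : Fin n.totient, ‖B J k‖ ^ 2 = Complex.normSq (B J k) :=
      fun k => Complex.sq_norm _
    simp_rw [hsq]
    exact Finset.single_le_sum (f := fun i => ∑ j, Complex.normSq (B i j))
      (fun i _ => Finset.sum_nonneg fun j _ => Complex.normSq_nonneg _) (Finset.mem_univ J)
  have habs_nonneg : 0 ≤ ‖c J‖ := norm_nonneg _
  have hA2 : Acoef n ^ 2 ≤ (n.totient : ℝ) * (Bᴴ * B).trace.re := by
    rw [hA]
    calc ‖c J‖ ^ 2 ≤ (∑ k, ‖B J k‖) ^ 2 :=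
          pow_le_pow_left₀ habs_nonneg h1 2
      _ ≤ (n.totient : ℝ) * ∑ k, ‖B J k‖ ^ 2 := hCS
      _ ≤ (n.totient : ℝ) * (Bᴴ * B).trace.re :=
          mul_le_mul_of_nonneg_left hrow (by positivity)
  rw [ge_iff_le, hfrob, div_le_iff₀ (by positivity)]
  have hn1 : (1 : ℝ) ≤ n := by exact_mod_cast hn
  have hm1 : (0 : ℝ) < n.totient := by exact_mod_cast hm
  nlinarith [htr_nonneg, hA2, hm1, hn1]
end

section
/- For every positive integer n, Cond(V_n) ≥ √(m/n) · A(n) ≥ A(n)/√n, where Cond(V_n) := ‖V_n‖·‖V_n^{-1}‖ is the condition number with respect to the Frobenius norm and A(n) := max_{0 ≤ j ≤ m−1} |a_n(j)|. -/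
open Matrix Polynomial Finset

lemma frobNorm_eq {α β : Type*} [Fintype α] [Fintype β] (A : Matrix α β ℂ) :
    frobNorm A = Real.sqrt (∑ i, ∑ j, ‖A i j‖ ^ 2) := by
  unfold frobNorm
  congr 1
  rw [Matrix.trace]
  simp only [Matrix.diag, Matrix.mul_apply, Matrix.conjTranspose_apply, Complex.re_sum]
  rw [Finset.sum_comm]
  congr 1; funext i; congr 1; funext j
  rw [Complex.star_def, mul_comm, Complex.mul_conj, Complex.sq_norm]; simp

lemma sum_sq_mulVec_le {α β : Type*} [Fintype α] [Fintype β] (M : Matrix α β ℂ) (v : β → ℂ) :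
    Real.sqrt (∑ i, ‖(M *ᵥ v) i‖ ^ 2) ≤
      frobNorm M * Real.sqrt (∑ j, ‖v j‖ ^ 2) := by
  rw [frobNorm_eq, ← Real.sqrt_mul (by positivity)]
  apply Real.sqrt_le_sqrt
  rw [Finset.sum_mul]
  apply Finset.sum_le_sum
  intro i _
  calc ‖(M *ᵥ v) i‖ ^ 2
      ≤ (∑ j, ‖M i j‖ * ‖v j‖) ^ 2 := by
        apply pow_le_pow_left₀ (by positivity)
        calc ‖(M *ᵥ v) i‖ = ‖∑ j, M i j * v j‖ := by
              simp [Matrix.mulVec, dotProduct]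
          _ ≤ ∑ j, ‖M i j * v j‖ := norm_sum_le _ _
          _ = ∑ j, ‖M i j‖ * ‖v j‖ := by simp [norm_mul]
    _ ≤ (∑ j, ‖M i j‖ ^ 2) * ∑ j, ‖v j‖ ^ 2 :=
        Finset.sum_mul_sq_le_sq_mul_sq _ _ _

theorem cond_vand_ge (n : ℕ) (hn : 0 < n) (ζ : Fin n.totient → ℂ)
    (hζ : Function.Injective ζ) (hζ' : ∀ i, IsPrimitiveRoot (ζ i) n) :
    condNum (vand n ζ) ≥ Real.sqrt ((n.totient : ℝ) / n) * Acoef n ∧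
    Real.sqrt ((n.totient : ℝ) / n) * Acoef n ≥ Acoef n / Real.sqrt n := by
  have hm0 : 0 < n.totient := Nat.totient_pos.mpr hn
  have hA0 : (0:ℝ) ≤ Acoef n := Nat.cast_nonneg _
  have habs : ∀ i, ‖ζ i‖ = 1 := fun i =>
    Complex.norm_eq_one_of_pow_eq_one (hζ' i).pow_eq_one hn.ne'
  -- frobNorm of V is m
  have hV : frobNorm (vand n ζ) = (n.totient : ℝ) := by
    rw [frobNorm_eq]
    have h1 : ∀ i j : Fin n.totient, ‖(vand n ζ) i j‖ ^ 2 = 1 := by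
      intro i j
      simp only [vand, norm_pow, habs, one_pow]
    simp only [h1, Finset.sum_const, Finset.card_univ, Fintype.card_fin, nsmul_eq_mul, mul_one]
    rw [← sq, Real.sqrt_sq (Nat.cast_nonneg _)]
  -- the vectors
  set s : Fin n.totient → ℂ := fun j => -((cyclotomic n ℂ).coeff j) with hsdef
  set w : Fin n.totient → ℂ := fun i => ζ i ^ n.totient with hwdef
  have hΦdeg : (cyclotomic n ℂ).natDegree = n.totient := natDegree_cyclotomic n ℂ
  have hVs : (vand n ζ) *ᵥ s = w := by
    funext i
    have hev : (cyclotomic n ℂ).eval (ζ i) = 0 := (hζ' i).isRoot_cyclotomic hn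
    rw [eval_eq_sum_range, hΦdeg, Finset.sum_range_succ] at hev
    have hlead : (cyclotomic n ℂ).coeff n.totient = 1 := by
      have := (cyclotomic.monic n ℂ).coeff_natDegree
      rwa [hΦdeg] at this
    rw [hlead] at hev
    show ∑ j : Fin n.totient, (vand n ζ) i j * s j = w i
    simp only [vand, hsdef, hwdef]
    rw [Fin.sum_univ_eq_sum_range (fun k => ζ i ^ k * -((cyclotomic n ℂ).coeff k)) n.totient]
    have hneg : ∑ k ∈ Finset.range n.totient, ζ i ^ k * -((cyclotomic n ℂ).coeff k)
        = -∑ k ∈ Finset.range n.totient, (cyclotomic n ℂ).coeff k * ζ i ^ k := by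
      rw [← Finset.sum_neg_distrib]
      exact Finset.sum_congr rfl (fun k _ => by ring)
    rw [hneg]
    linear_combination -hev
  have hdet : IsUnit (vand n ζ).det := by
    have hv : vand n ζ = Matrix.vandermonde ζ := rfl
    rw [hv, Matrix.det_vandermonde, isUnit_iff_ne_zero]
    apply Finset.prod_ne_zero_iff.mpr
    intro i _
    apply Finset.prod_ne_zero_iff.mpr
    intro j hj
    exact sub_ne_zero_of_ne (fun h => absurd (hζ h).symm (ne_of_lt (Finset.mem_Ioi.mp hj)))
  have hinv : (vand n ζ)⁻¹ *ᵥ w = s := by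
    rw [← hVs, Matrix.mulVec_mulVec, Matrix.nonsing_inv_mul _ hdet, Matrix.one_mulVec]
  -- norm of w
  have hw : Real.sqrt (∑ i, ‖w i‖ ^ 2) = Real.sqrt n.totient := by
    have h1 : ∀ i : Fin n.totient, ‖w i‖ ^ 2 = 1 := by
      intro i
      simp only [hwdef, norm_pow, habs, one_pow]
    simp [h1]
  -- norm of s is at least A
  have hsA : Acoef n ≤ Real.sqrt (∑ j, ‖s j‖ ^ 2) := by
    obtain ⟨j0, hj0mem, hj0⟩ := Finset.exists_mem_eq_sup (Finset.range n.totient)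
      ⟨0, Finset.mem_range.mpr hm0⟩ (fun j => ((cyclotomic n ℤ).coeff j).natAbs)
    have hj0m : j0 < n.totient := Finset.mem_range.mp hj0mem
    have hcoeff : (cyclotomic n ℂ).coeff j0 = (((cyclotomic n ℤ).coeff j0 : ℤ) : ℂ) := by
      rw [← map_cyclotomic_int n ℂ, Polynomial.coeff_map]; simp
    have habs' : ‖s ⟨j0, hj0m⟩‖ = Acoef n := by
      simp only [hsdef, norm_neg, hcoeff, Complex.norm_intCast]
      rw [Acoef, hj0]
      rw [Nat.cast_natAbs, Int.cast_abs]
    calc Acoef n = Real.sqrt (‖s ⟨j0, hj0m⟩‖ ^ 2) := by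
          rw [Real.sqrt_sq (by positivity), habs']
      _ ≤ _ := by
          apply Real.sqrt_le_sqrt
          exact Finset.single_le_sum (f := fun j : Fin n.totient => ‖s j‖ ^ 2)
            (fun i _ => by positivity) (Finset.mem_univ _)
  -- main bound: A ≤ frobNorm V⁻¹ * √m
  have hmain : Acoef n ≤ frobNorm (vand n ζ)⁻¹ * Real.sqrt n.totient := by
    calc Acoef n ≤ Real.sqrt (∑ j, ‖s j‖ ^ 2) := hsA
      _ = Real.sqrt (∑ j, ‖((vand n ζ)⁻¹ *ᵥ w) j‖ ^ 2) := by rw [hinv]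
      _ ≤ frobNorm (vand n ζ)⁻¹ * Real.sqrt (∑ i, ‖w i‖ ^ 2) :=
          sum_sq_mulVec_le _ _
      _ = frobNorm (vand n ζ)⁻¹ * Real.sqrt n.totient := by rw [hw]
  constructor
  · calc Real.sqrt ((n.totient : ℝ) / n) * Acoef n
        ≤ Real.sqrt n.totient * Acoef n := by
          gcongr
          apply div_le_self (Nat.cast_nonneg _)
          exact_mod_cast hn
      _ ≤ Real.sqrt n.totient * (frobNorm (vand n ζ)⁻¹ * Real.sqrt n.totient) := by
          gcongr
      _ = (n.totient : ℝ) * frobNorm (vand n ζ)⁻¹ := by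
          rw [mul_comm (frobNorm _) _, ← mul_assoc, Real.mul_self_sqrt (Nat.cast_nonneg _)]
      _ = condNum (vand n ζ) := by rw [condNum, hV]
  · rw [ge_iff_le, div_le_iff₀ (Real.sqrt_pos.mpr (by exact_mod_cast hn : (0:ℝ) < n)),
      mul_right_comm]
    have h2 : Real.sqrt ((n.totient : ℝ) / n) * Real.sqrt n = Real.sqrt n.totient := by
      rw [← Real.sqrt_mul (by positivity),
        div_mul_cancel₀ _ (by exact_mod_cast hn.ne' : (n:ℝ) ≠ 0)]
    rw [h2]
    nth_rewrite 1 [← one_mul (Acoef n)]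
    gcongr
    rw [show (1:ℝ) = Real.sqrt 1 by simp]
    exact Real.sqrt_le_sqrt (by exact_mod_cast hm0)
end
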